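/- Consider the composite function f = h ∘ c and for ε > 0 let z^ε(x) be the unique minimizer of z ↦ h(c(x) + ∇c(x)ᵀ(z − x)) + ‖z − x‖²/(2ε). For any compact set X ⊂ ℝⁿ and any ε̄ > 0, there exist positive constants δ and D such that sup_{ε∈(0,ε̄)} ‖z^ε(x) − x‖ ≤ D·dist(x, (∂f)⁻¹(0) ∩ X)^{1/2} for all x with dist(x, (∂f)⁻¹(0) ∩ X) ≤ δ. -/

import Mathlib

open Filter Topology Set
open scoped RealInnerProductSpace NNReal

noncomputable section

/-- The subdifferential (in the sense of convex analysis) of `h` at `u`. -/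
def convexSubdiff {m : ℕ} (h : EuclideanSpace ℝ (Fin m) → ℝ)
    (u : EuclideanSpace ℝ (Fin m)) : Set (EuclideanSpace ℝ (Fin m)) :=
  {v | ∀ z, h u + ⟪v, z - u⟫ ≤ h z}

/-- `∇c(x)`, the transpose (adjoint) of the Jacobian of `c` at `x`, acting `ℝᵐ → ℝⁿ`. -/
def nablaC {n m : ℕ}
    (c' : EuclideanSpace ℝ (Fin n) → (EuclideanSpace ℝ (Fin n) →L[ℝ] EuclideanSpace ℝ (Fin m)))
    (x : EuclideanSpace ℝ (Fin n)) :
    EuclideanSpace ℝ (Fin m) →L[ℝ] EuclideanSpace ℝ (Fin n) :=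
  ContinuousLinearMap.adjoint (c' x)

/-- The Clarke subdifferential of the composite `f = h ∘ c`:  `∂f(x) = ∇c(x) ∂h(c(x))`. -/
def compSubdiff {n m : ℕ} (c : EuclideanSpace ℝ (Fin n) → EuclideanSpace ℝ (Fin m))
    (c' : EuclideanSpace ℝ (Fin n) → (EuclideanSpace ℝ (Fin n) →L[ℝ] EuclideanSpace ℝ (Fin m)))
    (h : EuclideanSpace ℝ (Fin m) → ℝ) (x : EuclideanSpace ℝ (Fin n)) :
    Set (EuclideanSpace ℝ (Fin n)) :=
  (fun v => nablaC c' x v) '' convexSubdiff h (c x)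

/-- `y` belongs to the effective domain of the Fenchel conjugate `h*`. -/
def inDomStar {m : ℕ} (h : EuclideanSpace ℝ (Fin m) → ℝ)
    (y : EuclideanSpace ℝ (Fin m)) : Prop :=
  BddAbove (Set.range fun z => ⟪y, z⟫ - h z)

/-- The Fenchel conjugate `h*(y) = sup_z {⟨y, z⟩ − h(z)}` (real-valued on its domain). -/
def fenchelConj {m : ℕ} (h : EuclideanSpace ℝ (Fin m) → ℝ)
    (y : EuclideanSpace ℝ (Fin m)) : ℝ :=
  ⨆ z, (⟪y, z⟫ - h z)

/-- The dual regularized solution set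
`Y^ε(x) = argmax_y {yᵀc(x) − h*(y) − (ε/2)‖∇c(x) y‖²}`
(the maximization being over the effective domain of `h*`). -/
def regDual {n m : ℕ} (c : EuclideanSpace ℝ (Fin n) → EuclideanSpace ℝ (Fin m))
    (c' : EuclideanSpace ℝ (Fin n) → (EuclideanSpace ℝ (Fin n) →L[ℝ] EuclideanSpace ℝ (Fin m)))
    (h : EuclideanSpace ℝ (Fin m) → ℝ) (ε : ℝ) (x : EuclideanSpace ℝ (Fin n)) :
    Set (EuclideanSpace ℝ (Fin m)) :=
  {y | inDomStar h y ∧ ∀ y', inDomStar h y' →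
    ⟪y', c x⟫ - fenchelConj h y' - ε / 2 * ‖nablaC c' x y'‖ ^ 2 ≤
      ⟪y, c x⟫ - fenchelConj h y - ε / 2 * ‖nablaC c' x y‖ ^ 2}

/-- The subgradient-regularized map `G(x, ε) = {∇c(x) y : y ∈ Y^ε(x)}`. -/
def Gcomp {n m : ℕ} (c : EuclideanSpace ℝ (Fin n) → EuclideanSpace ℝ (Fin m))
    (c' : EuclideanSpace ℝ (Fin n) → (EuclideanSpace ℝ (Fin n) →L[ℝ] EuclideanSpace ℝ (Fin m)))
    (h : EuclideanSpace ℝ (Fin m) → ℝ) (x : EuclideanSpace ℝ (Fin n)) (ε : ℝ) :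
    Set (EuclideanSpace ℝ (Fin n)) :=
  (fun y => nablaC c' x y) '' regDual c c' h ε x

/-- The prox-linear objective `z ↦ h(c(x) + ∇c(x)ᵀ(z − x)) + ‖z − x‖²/(2ε)`. -/
def proxObj {n m : ℕ} (c : EuclideanSpace ℝ (Fin n) → EuclideanSpace ℝ (Fin m))
    (c' : EuclideanSpace ℝ (Fin n) → (EuclideanSpace ℝ (Fin n) →L[ℝ] EuclideanSpace ℝ (Fin m)))
    (h : EuclideanSpace ℝ (Fin m) → ℝ) (ε : ℝ) (x z : EuclideanSpace ℝ (Fin n)) : ℝ :=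
  h (c x + (c' x) (z - x)) + ‖z - x‖ ^ 2 / (2 * ε)

/-! Let `p` be a stationary point close to `x`, so that some `v ∈ ∂h(c p)` has `∇c(p) v = 0`;
Lipschitz continuity of `h` gives `‖v‖ ≤ L`. Comparing the prox-linear objective at its minimizer
`x + s` with its value at `x`, and bounding `h(c x + c'(x) s)` from below by the subgradient
inequality at `c p`, yields
`‖s‖² / (2ε) ≤ 2L ‖c x - c p‖ + L ‖c'(x) - c'(p)‖ ‖s‖`,
where `∇c(p) v = 0` is what allows `c'(x)` to be replaced by `c'(x) - c'(p)`.
Both norms on the right are `O(‖x - p‖)` because `c'` is Lipschitz and bounded on the compact `X`,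
so the quadratic inequality gives `‖s‖ = O(‖x - p‖^{1/2})` uniformly in `ε < ε̄`; it remains to let
`‖x - p‖` approach `dist(x, (∂f)⁻¹(0) ∩ X)`. -/

open Metric

lemma le_add_sqrt_of_sq_le_add_mul {u a b : ℝ} (ha : 0 ≤ a) (hb : 0 ≤ b)
    (h : u ^ 2 ≤ a + b * u) : u ≤ b + √a := by
  by_contra! hlt
  nlinarith [Real.sq_sqrt ha, Real.sqrt_nonneg a]

lemma le_infDist_of_forall_dist_lt {α : Type*} [PseudoMetricSpace α] {s : Set α} {x : α}
    {a R : ℝ} (hs : s.Nonempty) (hR : infDist x s < R)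
    (h : ∀ y ∈ s, dist x y < R → a ≤ dist x y) : a ≤ infDist x s := by
  refine le_of_forall_gt_imp_ge_of_dense fun d hd => ?_
  obtain ⟨y, hy, hyd⟩ := (infDist_lt_iff hs).mp (lt_min hd hR)
  exact (h y hy (hyd.trans_le (min_le_right _ _))).trans (hyd.trans_le (min_le_left _ _)).le

lemma norm_sub_le_of_hasFDerivAt_of_lipschitzWith {E F : Type*} [NormedAddCommGroup E]
    [NormedSpace ℝ E] [NormedAddCommGroup F] [NormedSpace ℝ F] {c : E → F} {c' : E → E →L[ℝ] F}
    {β : ℝ≥0} (hc : ∀ x, HasFDerivAt c (c' x) x) (hβ : LipschitzWith β c') (x y : E) :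
    ‖c x - c y‖ ≤ (‖c' y‖ + β * ‖x - y‖) * ‖x - y‖ := by
  refine (convex_segment y x).norm_image_sub_le_of_norm_hasFDerivWithin_le
    (fun p _ => (hc p).hasFDerivWithinAt) (fun p hp => ?_)
    (left_mem_segment ℝ y x) (right_mem_segment ℝ y x)
  calc ‖c' p‖ ≤ ‖c' y‖ + ‖c' p - c' y‖ := norm_le_insert' _ _
    _ ≤ ‖c' y‖ + β * ‖p - y‖ := by
      gcongr; simpa only [dist_eq_norm] using hβ.dist_le_mul p y
    _ ≤ ‖c' y‖ + β * ‖x - y‖ := by gcongr; exact norm_sub_le_of_mem_segment hp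

lemma norm_le_of_mem_convexSubdiff {m : ℕ} {h : EuclideanSpace ℝ (Fin m) → ℝ} {L : ℝ≥0}
    (hL : LipschitzWith L h) {u v : EuclideanSpace ℝ (Fin m)} (hv : v ∈ convexSubdiff h u) :
    ‖v‖ ≤ L := by
  have hsub : h u + ‖v‖ ^ 2 ≤ h (u + v) := by
    simpa [real_inner_self_eq_norm_sq] using hv (u + v)
  have hlip : h (u + v) - h u ≤ L * ‖v‖ := by
    simpa [dist_eq_norm] using (abs_le.mp (hL.dist_le_mul (u + v) u)).2
  nlinarith [norm_nonneg v]

section Composite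

variable {n m : ℕ} {c : EuclideanSpace ℝ (Fin n) → EuclideanSpace ℝ (Fin m)}
  {c' : EuclideanSpace ℝ (Fin n) → (EuclideanSpace ℝ (Fin n) →L[ℝ] EuclideanSpace ℝ (Fin m))}
  {h : EuclideanSpace ℝ (Fin m) → ℝ} {L : ℝ≥0}

lemma sq_norm_sub_le_of_proxObj_le (hL : LipschitzWith L h)
    {x p w : EuclideanSpace ℝ (Fin n)} {v : EuclideanSpace ℝ (Fin m)} {ε : ℝ}
    (hv : v ∈ convexSubdiff h (c p)) (hv0 : nablaC c' p v = 0) (hε : 0 < ε)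
    (hw : proxObj c c' h ε x w ≤ proxObj c c' h ε x x) :
    ‖w - x‖ ^ 2 ≤ 2 * ε * L * (2 * ‖c x - c p‖ + ‖c' x - c' p‖ * ‖w - x‖) := by
  set s := w - x
  have hvL := norm_le_of_mem_convexSubdiff hL hv
  have hdesc : h (c x + c' x s) + ‖s‖ ^ 2 / (2 * ε) ≤ h (c x) := by
    simpa only [proxObj, sub_self, map_zero, add_zero, norm_zero, ne_eq,
      OfNat.ofNat_ne_zero, not_false_eq_true, zero_pow, zero_div] using hw
  have hsub := hv (c x + c' x s)
  have hsplit : ⟪v, c x + c' x s - c p⟫ = ⟪v, c x - c p⟫ + ⟪v, (c' x - c' p) s⟫ := by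
    have hker : ⟪v, c' p s⟫ = 0 := by
      rw [← ContinuousLinearMap.adjoint_inner_left, ← nablaC, hv0, inner_zero_left]
    rw [show c x + c' x s - c p = (c x - c p) + (c' x - c' p) s + c' p s by
      simp only [sub_apply]; abel, inner_add_right, inner_add_right, hker,
      add_zero]
  have hlip : h (c x) - h (c p) ≤ L * ‖c x - c p‖ := by
    simpa [dist_eq_norm] using (abs_le.mp (hL.dist_le_mul (c x) (c p))).2
  have hin₁ : -⟪v, c x - c p⟫ ≤ L * ‖c x - c p‖ :=
    (neg_le_abs _).trans ((abs_real_inner_le_norm _ _).trans (by gcongr))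
  have hin₂ : -⟪v, (c' x - c' p) s⟫ ≤ L * (‖c' x - c' p‖ * ‖s‖) :=
    (neg_le_abs _).trans ((abs_real_inner_le_norm _ _).trans
      (mul_le_mul hvL ((c' x - c' p).le_opNorm s) (norm_nonneg _) L.coe_nonneg))
  have hq : ‖s‖ ^ 2 / (2 * ε) ≤ L * (2 * ‖c x - c p‖ + ‖c' x - c' p‖ * ‖s‖) := by
    linarith
  rw [div_le_iff₀ (by positivity)] at hq
  linarith

lemma norm_sub_le_mul_sqrt_of_stationary (hc : ∀ x, HasFDerivAt c (c' x) x) {β : ℝ≥0}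
    (hβ : LipschitzWith β c') (hL : LipschitzWith L h) {x p w : EuclideanSpace ℝ (Fin n)}
    {K ε εbar : ℝ} (hp : 0 ∈ compSubdiff c c' h p) (hK : ‖c' p‖ ≤ K) (hxp : ‖x - p‖ ≤ 1)
    (hε : 0 < ε) (hεbar : ε ≤ εbar) (hw : proxObj c c' h ε x w ≤ proxObj c c' h ε x x) :
    ‖w - x‖ ≤ (2 * εbar * L * β + 2 * √(εbar * L * (K + β))) * √‖x - p‖ := by
  obtain ⟨v, hv, hv0⟩ := hp
  set r := ‖x - p‖
  have hK0 : 0 ≤ K := (norm_nonneg _).trans hK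
  have hεbar0 : 0 ≤ εbar := hε.le.trans hεbar
  have hcx : ‖c x - c p‖ ≤ (K + β) * r :=
    (norm_sub_le_of_hasFDerivAt_of_lipschitzWith hc hβ x p).trans (by gcongr; nlinarith)
  have hc'x : ‖c' x - c' p‖ ≤ β * r := by
    simpa only [dist_eq_norm] using hβ.dist_le_mul x p
  have hq : ‖w - x‖ ^ 2 ≤ 4 * ε * L * (K + β) * r + 2 * ε * L * β * r * ‖w - x‖ := by
    have hsq := sq_norm_sub_le_of_proxObj_le hL hv hv0 hε hw
    have hlin : 2 * ‖c x - c p‖ + ‖c' x - c' p‖ * ‖w - x‖ ≤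
        2 * ((K + β) * r) + β * r * ‖w - x‖ := by
      gcongr
    nlinarith [mul_le_mul_of_nonneg_left hlin (by positivity : (0 : ℝ) ≤ 2 * ε * L)]
  have hr_sqrt : r ≤ √r := Real.le_sqrt_self_iff.mpr hxp
  calc ‖w - x‖ ≤ 2 * ε * L * β * r + √(4 * ε * L * (K + β) * r) :=
        le_add_sqrt_of_sq_le_add_mul (by positivity) (by positivity) hq
    _ ≤ 2 * εbar * L * β * √r + √(2 ^ 2 * (εbar * L * (K + β)) * r) := by
        have hε' : ε * (L * (K + β)) * r ≤ εbar * (L * (K + β)) * r := by gcongr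
        gcongr 2 * ?_ * L * β * ?_ + √?_
        linarith
    _ = (2 * εbar * L * β + 2 * √(εbar * L * (K + β))) * √r := by
        rw [Real.sqrt_mul (by positivity), Real.sqrt_mul (by positivity),
          Real.sqrt_sq zero_le_two]
        ring

end Composite

theorem composite_holder_stability_general {n m : ℕ}
    (c : EuclideanSpace ℝ (Fin n) → EuclideanSpace ℝ (Fin m))
    (c' : EuclideanSpace ℝ (Fin n) → (EuclideanSpace ℝ (Fin n) →L[ℝ] EuclideanSpace ℝ (Fin m)))
    (β : ℝ≥0) (hc : ∀ x, HasFDerivAt c (c' x) x) (hβ : LipschitzWith β c')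
    (h : EuclideanSpace ℝ (Fin m) → ℝ) (L : ℝ≥0)
    (hL : LipschitzWith L h)
    (z : ℝ → EuclideanSpace ℝ (Fin n) → EuclideanSpace ℝ (Fin n))
    (hz : ∀ ε > (0 : ℝ), ∀ x w : EuclideanSpace ℝ (Fin n),
      proxObj c c' h ε x (z ε x) ≤ proxObj c c' h ε x w)
    (X : Set (EuclideanSpace ℝ (Fin n))) (hX : IsCompact X)
    (hne : ({p | (0 : EuclideanSpace ℝ (Fin n)) ∈ compSubdiff c c' h p} ∩ X).Nonempty)
    (εbar : ℝ) (hεbar : 0 < εbar) :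
    ∃ δ > (0 : ℝ), ∃ D > (0 : ℝ), ∀ x : EuclideanSpace ℝ (Fin n),
      Metric.infDist x ({p | (0 : EuclideanSpace ℝ (Fin n)) ∈ compSubdiff c c' h p} ∩ X) ≤ δ →
      ∀ ε ∈ Set.Ioo (0 : ℝ) εbar,
        ‖z ε x - x‖ ≤ D * Real.sqrt
          (Metric.infDist x ({p | (0 : EuclideanSpace ℝ (Fin n)) ∈ compSubdiff c c' h p} ∩ X)) := by
  obtain ⟨K, hK⟩ := hX.exists_bound_of_continuousOn hβ.continuous.continuousOn
  set D := 2 * εbar * L * β + 2 * √(εbar * L * (K + β)) + 1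
  have hD : 0 < D := by positivity
  refine ⟨1 / 2, by norm_num, D, hD, fun x hx ε ⟨hε, hε_lt⟩ => ?_⟩
  have hsq : (‖z ε x - x‖ / D) ^ 2 ≤ infDist x ({p | 0 ∈ compSubdiff c c' h p} ∩ X) := by
    refine le_infDist_of_forall_dist_lt hne (hx.trans_lt one_half_lt_one) fun p hp hxp => ?_
    rw [dist_eq_norm] at hxp ⊢
    have hp_bound := norm_sub_le_mul_sqrt_of_stationary hc hβ hL hp.1 (hK p hp.2) hxp.le hε
      hε_lt.le (hz ε hε x x)
    rw [← Real.le_sqrt (by positivity) (norm_nonneg _), div_le_iff₀ hD, mul_comm]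
    exact hp_bound.trans (by gcongr; linarith)
  rw [mul_comm, ← div_le_iff₀ hD]
  exact Real.le_sqrt_of_sq_le hsq

/-- uniform Hölder stability near stationary points: with `z^ε(x)`
the unique minimizer of the prox-linear subproblem, for any compact `X` (with
`(∂f)⁻¹(0) ∩ X ≠ ∅`) and any `ε̄ > 0` there exist `δ, D > 0` such that
`sup_{ε ∈ (0, ε̄)} ‖z^ε(x) − x‖ ≤ D · dist(x, (∂f)⁻¹(0) ∩ X)^{1/2}` for all `x`
with `dist(x, (∂f)⁻¹(0) ∩ X) ≤ δ`. -/
theorem composite_holder_stability {n m : ℕ}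
    (c : EuclideanSpace ℝ (Fin n) → EuclideanSpace ℝ (Fin m))
    (c' : EuclideanSpace ℝ (Fin n) → (EuclideanSpace ℝ (Fin n) →L[ℝ] EuclideanSpace ℝ (Fin m)))
    (β : ℝ≥0) (hc : ∀ x, HasFDerivAt c (c' x) x) (hβ : LipschitzWith β c')
    (h : EuclideanSpace ℝ (Fin m) → ℝ) (L : ℝ≥0)
    (hconv : ConvexOn ℝ Set.univ h) (hL : LipschitzWith L h)
    (hbdd : BddBelow (Set.range h))
    (z : ℝ → EuclideanSpace ℝ (Fin n) → EuclideanSpace ℝ (Fin n))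
    (hz : ∀ ε > (0 : ℝ), ∀ x w : EuclideanSpace ℝ (Fin n),
      proxObj c c' h ε x (z ε x) ≤ proxObj c c' h ε x w)
    (X : Set (EuclideanSpace ℝ (Fin n))) (hX : IsCompact X)
    (hne : ({p | (0 : EuclideanSpace ℝ (Fin n)) ∈ compSubdiff c c' h p} ∩ X).Nonempty)
    (εbar : ℝ) (hεbar : 0 < εbar) :
    ∃ δ > (0 : ℝ), ∃ D > (0 : ℝ), ∀ x : EuclideanSpace ℝ (Fin n),
      Metric.infDist x ({p | (0 : EuclideanSpace ℝ (Fin n)) ∈ compSubdiff c c' h p} ∩ X) ≤ δ →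
      ∀ ε ∈ Set.Ioo (0 : ℝ) εbar,
        ‖z ε x - x‖ ≤ D * Real.sqrt
          (Metric.infDist x ({p | (0 : EuclideanSpace ℝ (Fin n)) ∈ compSubdiff c c' h p} ∩ X)) :=
  composite_holder_stability_general c c' β hc hβ h L hL z hz X hX hne εbar hεbar
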